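/- arXiv:1903.07328 — 2 statements merged into one kernel-verified Lean document; each statement's English description precedes it below -/
import Mathlib

section
/- Let A be a parametric timed automaton over the alphabet Σ ⊔ {$} and let w be a timed word over Σ with timestamps τ_1 < … < τ_{|w|}. For all indices i, j with 1 ≤ i ≤ j ≤ |w|, every location ℓ of A and every parameter valuation v of A the following holds: if there exists a real t with 0 ≤ t < τ_i and w(i,j) − t ∈ L(A_ℓ[v]), then for every integer n with 1 ≤ n, n < Δ_KMP(ℓ,{v}) and i + n ≤ |w|, the match set M(w,A) contains no triple (t₀,t′,v′) with τ_{i+n−1} ≤ t₀ < τ_{i+n}. -/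
open scoped Classical NNRat

namespace PTPM

/-- Timed words over an alphabet `α`: finite sequences of (letter, timestamp). -/
abbrev TWord (α : Type*) := List (α × ℝ)

/-- Well-formedness of a timed word: positive, strictly increasing timestamps. -/
def IsTW {α : Type*} (w : TWord α) : Prop :=
  (∀ p ∈ w, 0 < p.2) ∧ w.Chain' (fun p q => p.2 < q.2)

/-- `T(Σ)`: the set of timed words over `α`. -/
def TW (α : Type*) : Set (TWord α) := {w | IsTW w}

/-- `T^n(Σ)`: the set of timed words over `α` of length `n`. -/
def TWn (α : Type*) (n : ℕ) : Set (TWord α) := {w | IsTW w ∧ w.length = n}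

/-- The shift `w + s` of a timed word. -/
def shift {α : Type*} (w : TWord α) (s : ℝ) : TWord α := w.map fun p => (p.1, p.2 + s)

/-- Last timestamp of a timed word (`0` for the empty word). -/
def lastT {α : Type*} (w : TWord α) : ℝ := (w.getLast?.map Prod.snd).getD 0

/-- Non-absorbing concatenation `w · w'`. -/
def ncat {α : Type*} (w w' : TWord α) : TWord α := w ++ shift w' (lastT w)

/-- Non-absorbing concatenation lifted to sets of timed words. -/
def ncatS {α : Type*} (W W' : Set (TWord α)) : Set (TWord α) :=
  {u | ∃ w ∈ W, ∃ w' ∈ W', u = ncat w w'}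

/-- `τ_k`, the `k`-th timestamp (1-indexed), with `τ_0 = 0`. -/
def tau {α : Type*} (w : TWord α) (k : ℕ) : ℝ := lastT (w.take k)

/-- The subsequence `w(i,j)` (1-indexed, both inclusive; empty if `i > j`). -/
def sub {α : Type*} (w : TWord α) (i j : ℕ) : TWord α := (w.take j).drop (i - 1)

/-- Letter at position `k` (1-indexed), if any. -/
def letterAt {α : Type*} (w : TWord α) (k : ℕ) : Option α := w[k - 1]?.map Prod.fst

/-- Embedding of timed words over `Σ` into timed words over `Σ ⊔ {$}`;
the terminal character `$` is modelled by `none`. -/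
def liftW {α : Type*} (w : TWord α) : TWord (Option α) := w.map fun p => (some p.1, p.2)

/-- `T(Σ)` viewed inside the alphabet `Σ ⊔ {$}`. -/
def TWl (α : Type*) : Set (TWord (Option α)) := liftW '' TW α

/-- `T^n(Σ)` viewed inside the alphabet `Σ ⊔ {$}`. -/
def TWln (α : Type*) (n : ℕ) : Set (TWord (Option α)) := liftW '' TWn α n

/-- The segment `w|_(t,t')`, a timed word over `Σ ⊔ {$}`. -/
noncomputable def seg {α : Type*} (w : TWord α) (t t' : ℝ) : TWord (Option α) :=
  (w.filter fun p => decide (t < p.2 ∧ p.2 < t')).map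
      (fun p => ((some p.1 : Option α), p.2 - t))
    ++ [((none : Option α), t' - t)]

/-- `L_{-$}`: the words of `L` with the last element removed. -/
def minusDollar {β : Type*} (L : Set (TWord β)) : Set (TWord β) :=
  {u | ∃ x ∈ L, x ≠ [] ∧ u = x.dropLast}

/-- Untimed projection of a timed word. -/
def untimed {α : Type*} (w : TWord α) : List α := w.map Prod.fst

/-- Untimed projection of a set of timed words. -/
def untimedS {α : Type*} (W : Set (TWord α)) : Set (List α) := untimed '' W

/-- `U · Σ*`: the set of finite words having a prefix in `U`. -/
def prefSet {σ : Type*} (U : Set (List σ)) : Set (List σ) := {x | ∃ u ∈ U, ∃ s, x = u ++ s}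

/-- `Ŷ = {y + s | y ∈ Y, s ≥ 0}`. -/
def hatS {α : Type*} (Y : Set (TWord α)) : Set (TWord α) :=
  {u | ∃ y ∈ Y, ∃ s : ℝ, 0 ≤ s ∧ u = shift y s}

/-- Comparison operators `⋈ ∈ {<, ≤, =, ≥, >}`. -/
inductive Cmp | lt | le | eq | ge | gt

def Cmp.eval : Cmp → ℝ → ℝ → Prop
  | .lt, a, b => a < b
  | .le, a, b => a ≤ b
  | .eq, a, b => a = b
  | .ge, a, b => b ≤ a
  | .gt, a, b => b < a

/-- Atomic guard constraints `x ⋈ d` (`d ∈ ℕ`) and `x ⋈ p` (`p` a parameter). -/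
inductive Atom (C P : Type*)
  | nat (x : C) (op : Cmp) (d : ℕ)
  | par (x : C) (op : Cmp) (p : P)

/-- A guard: a finite conjunction of atomic constraints. -/
abbrev Guard (C P : Type*) := List (Atom C P)

def Atom.sat {C P : Type*} (μ : C → ℝ) (v : P → ℚ≥0) : Atom C P → Prop
  | .nat x op d => op.eval (μ x) (d : ℝ)
  | .par x op p => op.eval (μ x) ((v p : ℚ) : ℝ)

/-- `μ ⊨ v(g)`. -/
def Guard.sat {C P : Type*} (μ : C → ℝ) (v : P → ℚ≥0) (g : Guard C P) : Prop :=
  ∀ a ∈ g, a.sat μ v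

def Atom.mapCP {C P C' P' : Type*} (fc : C → C') (fp : P → P') : Atom C P → Atom C' P'
  | .nat x op d => .nat (fc x) op d
  | .par x op p => .par (fc x) op (fp p)

def Guard.mapCP {C P C' P' : Type*} (fc : C → C') (fp : P → P') (g : Guard C P) :
    Guard C' P' :=
  g.map (Atom.mapCP fc fp)

/-- Parametric timed automaton with alphabet `α`, locations `L`, clocks `C`, parameters `P`.
An edge `(ℓ, g, a, R, ℓ')` has source `ℓ`, guard `g`, action `a`, resets `R`, target `ℓ'`. -/
structure PTA (α L C P : Type*) where
  init : L
  acc : Set L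
  edges : Set (L × Guard C P × α × Set C × L)
  finEdges : edges.Finite

/-- Reset of the clocks in `R` to `0`. -/
noncomputable def resetv {C : Type*} (μ : C → ℝ) (R : Set C) : C → ℝ :=
  fun x => if x ∈ R then 0 else μ x

/-- `Steps A v ℓ μ τ w ℓ'`: from configuration (location `ℓ`, clock valuation `μ`,
absolute time `τ`) there is a run of `A[v]` reading the timed word `w` and ending in `ℓ'`. -/
inductive Steps {α L C P : Type*} (A : PTA α L C P) (v : P → ℚ≥0) :
    L → (C → ℝ) → ℝ → TWord α → L → Prop
  | refl (ℓ : L) (μ : C → ℝ) (τ : ℝ) : Steps A v ℓ μ τ [] ℓ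
  | step {ℓ : L} {μ : C → ℝ} {τ : ℝ} {g : Guard C P} {a : α} {R : Set C} {ℓ' ℓ'' : L}
      {d : ℝ} {w : TWord α}
      (hd : 0 ≤ d)
      (he : (ℓ, g, a, R, ℓ') ∈ A.edges)
      (hg : Guard.sat (fun x => μ x + d) v g)
      (h : Steps A v ℓ' (resetv (fun x => μ x + d) R) (τ + d) w ℓ'') :
      Steps A v ℓ μ τ ((a, τ + d) :: w) ℓ''

/-- The language `L(A[v])`: associated words of accepting runs that are timed words. -/
def lang {α L C P : Type*} (A : PTA α L C P) (v : P → ℚ≥0) : Set (TWord α) :=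
  {w | IsTW w ∧ ∃ ℓ ∈ A.acc, Steps A v A.init (fun _ => 0) 0 w ℓ}

/-- `A_ℓ`: the PTA `A` with accepting set `{ℓ}`. -/
def PTA.locAcc {α L C P : Type*} (A : PTA α L C P) (ℓ : L) : PTA α L C P :=
  { A with acc := {ℓ} }

/-- The match set `M(w, A)`. -/
def matchSet {α L C P : Type*} (w : TWord α) (A : PTA (Option α) L C P) :
    Set (ℝ × ℝ × (P → ℚ≥0)) :=
  {x | 0 ≤ x.1 ∧ x.1 < x.2.1 ∧ seg w x.1 x.2.1 ∈ lang A x.2.2}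

/-- `V_{ℓ,n}`. -/
def Vset {α L C P : Type*} (A : PTA (Option α) L C P) (ℓ : L) (n : ℕ) :
    Set (P → ℚ≥0) :=
  {v | ∃ v' : P → ℚ≥0,
    (ncatS (lang (A.locAcc ℓ) v) (TWl α) ∩
      ncatS (ncatS (TWln α n) (hatS (minusDollar (lang A v')))) (TWl α)).Nonempty}

/-- The KMP-style skip value `Δ_KMP(ℓ, V) = min {n ≥ 1 | V ⊆ V_{ℓ,n}}` (min ∅ = ⊤). -/
noncomputable def DeltaKMP {α L C P : Type*} (A : PTA (Option α) L C P) (ℓ : L)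
    (V : Set (P → ℚ≥0)) : ℕ∞ :=
  sInf ((fun n : ℕ => (n : ℕ∞)) '' {n : ℕ | 1 ≤ n ∧ V ⊆ Vset A ℓ n})

/-- The non-parametric KMP-style skip value `Δ'_KMP(ℓ) = min_v Δ_KMP(ℓ, {v})`. -/
noncomputable def DeltaKMP' {α L C P : Type*} (A : PTA (Option α) L C P) (ℓ : L) : ℕ∞ :=
  ⨅ v : P → ℚ≥0, DeltaKMP A ℓ {v}

/-- Untimed words over `Σ`, viewed inside `Σ ⊔ {$}`. -/
def pureW {α : Type*} (x : List (Option α)) : Prop := ∀ c ∈ x, c ≠ none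

/-- `Σ^n · U` for sets of finite untimed words. -/
def catLen {α : Type*} (n : ℕ) (U : Set (List (Option α))) : Set (List (Option α)) :=
  {y | ∃ x u, x.length = n ∧ pureW x ∧ u ∈ U ∧ y = x ++ u}

/-- `Σ^N a Σ*`: finite words of length at least `N+1` whose `(N+1)`-st letter is `a`. -/
def sigNa {α : Type*} (N : ℕ) (a : α) : Set (List (Option α)) :=
  {x | N + 1 ≤ x.length ∧ x[N]? = some (some a)}

/-- The Quick-Search-style skip value `Δ_QS(a)` (min ∅ = ⊤). -/
noncomputable def DeltaQS {α L C P : Type*} (A : PTA (Option α) L C P) (N : ℕ) (a : α) :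
    ℕ∞ :=
  sInf ((fun n : ℕ => (n : ℕ∞)) '' {n : ℕ | 1 ≤ n ∧ ∃ v : P → ℚ≥0,
    (sigNa N a ∩ catLen n (untimedS (minusDollar (lang A v)))).Nonempty})

section Helpers
variable {α : Type*}

lemma shift_append (a b : TWord α) (s : ℝ) : shift (a ++ b) s = shift a s ++ shift b s :=
  List.map_append

lemma shift_shift (w : TWord α) (s s' : ℝ) : shift (shift w s) s' = shift w (s + s') := by
  simp only [shift, List.map_map]
  congr 1
  funext p
  simp [add_assoc]

lemma liftW_shift (w : TWord α) (s : ℝ) : liftW (shift w s) = shift (liftW w) s := by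
  simp only [liftW, shift, List.map_map]
  rfl

lemma liftW_append (a b : TWord α) : liftW (a ++ b) = liftW a ++ liftW b :=
  List.map_append

lemma lastT_liftW (w : TWord α) : lastT (liftW w) = lastT w := by
  simp only [lastT, liftW, List.getLast?_map]
  cases w.getLast? <;> simp

lemma lastT_shift (w : TWord α) (hw : w ≠ []) (s : ℝ) : lastT (shift w s) = lastT w + s := by
  rw [lastT, lastT, shift, List.getLast?_map, List.getLast?_eq_getLast hw]
  simp

lemma lastT_eq_getLast (w : TWord α) (h : w ≠ []) : lastT w = (w.getLast h).2 := by
  rw [lastT, List.getLast?_eq_getLast h]; rfl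

lemma map_some_sub (l : TWord α) (c : ℝ) :
    l.map (fun p => ((some p.1 : Option α), p.2 - c)) = liftW (shift l (-c)) := by
  simp only [liftW, shift, List.map_map]
  exact List.map_congr_left fun p _ => by simp [sub_eq_add_neg]

lemma lastT_sub (w : TWord α) {i k : ℕ} (h1 : 1 ≤ i) (hik : i ≤ k) (hkm : k ≤ w.length) :
    lastT (sub w i k) = (w[k-1]'(by omega)).2 := by
  have hlen : (sub w i k).length = k - (i-1) := by
    simp only [sub, List.length_drop, List.length_take]
    omega
  have hne : sub w i k ≠ [] := by
    intro h; rw [h] at hlen; simp at hlen; omega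
  rw [lastT, List.getLast?_eq_getElem?, hlen]
  have e1 : (sub w i k)[k - (i-1) - 1]? = w[k-1]? := by
    rw [sub, List.getElem?_drop]
    have e : (i-1) + (k-(i-1)-1) = k-1 := by omega
    rw [e, List.getElem?_take, if_pos (by omega)]
  rw [e1, List.getElem?_eq_getElem (by omega)]
  rfl

lemma tau_eq (w : TWord α) {k : ℕ} (h1 : 1 ≤ k) (hk : k ≤ w.length) :
    tau w k = (w[k-1]'(by omega)).2 := by
  have : tau w k = lastT (sub w 1 k) := by simp [tau, sub]
  rw [this, lastT_sub w le_rfl h1 hk]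

lemma snd_lt_of_pairwise {w : TWord α} (hw : w.Pairwise fun p q => p.2 < q.2)
    {a b : ℕ} (hab : a < b) (hb : b < w.length) : (w[a]'(by omega)).2 < (w[b]'hb).2 :=
  List.pairwise_iff_getElem.1 hw a b (by omega) hb hab

lemma snd_le_of_pairwise {w : TWord α} (hw : w.Pairwise fun p q => p.2 < q.2)
    {a b : ℕ} (hab : a ≤ b) (hb : b < w.length) : (w[a]'(by omega)).2 ≤ (w[b]'hb).2 := by
  rcases eq_or_lt_of_le hab with rfl | h
  · exact le_rfl
  · exact le_of_lt (snd_lt_of_pairwise hw h hb)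

lemma filter_eq_takeWhile {l : TWord α} (hl : l.Pairwise fun p q => p.2 < q.2) (c : ℝ) :
    l.filter (fun p => decide (p.2 < c)) = l.takeWhile (fun p => decide (p.2 < c)) := by
  induction l with
  | nil => rfl
  | cons a l ih =>
    rcases List.pairwise_cons.1 hl with ⟨ha, hl'⟩
    by_cases h : a.2 < c
    · simp only [List.filter_cons, List.takeWhile_cons, decide_eq_true h, ih hl']
      simp
    · simp only [List.filter_cons, List.takeWhile_cons, decide_eq_false h]
      simp only [Bool.false_eq_true, if_false, cond_false]
      rw [List.filter_eq_nil_iff]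
      intro p hp
      simp only [decide_eq_true_eq]
      push_neg at h ⊢
      exact le_trans h (le_of_lt (ha p hp))

lemma isTW_shift_neg {l : TWord α} (hc : l.Chain' fun p q => p.2 < q.2) (c : ℝ)
    (h : ∀ p ∈ l, c < p.2) : IsTW (shift l (-c)) := by
  constructor
  · intro p hp
    simp only [shift, List.mem_map] at hp
    obtain ⟨q, hq, rfl⟩ := hp
    have := h q hq
    simp only
    linarith
  · rw [shift, List.Chain', List.isChain_map]
    exact hc.imp fun a b hab => by simp only; linarith

lemma drop_take_drop (w : List (α × ℝ)) {s k : ℕ} (hsk : s ≤ k) (hk : k ≤ w.length) :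
    (w.take k).drop s ++ w.drop k = w.drop s := by
  conv_rhs => rw [← List.take_append_drop k w]
  rw [List.drop_append_of_le_length (by simp; omega)]

end Helpers
/-- Theorem `KMP`: correctness of the parametric KMP-style skipping. -/
theorem statement0 {α L C P : Type*} [Finite α] [Finite L] [Finite C] [Finite P]
    (A : PTA (Option α) L C P) (w : TWord α) (hw : IsTW w)
    (i j : ℕ) (hi : 1 ≤ i) (hij : i ≤ j) (hj : j ≤ w.length)
    (ℓ : L) (v : P → ℚ≥0)
    (hmatch : ∃ t : ℝ, 0 ≤ t ∧ t < tau w i ∧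
      liftW (shift (sub w i j) (-t)) ∈ lang (A.locAcc ℓ) v) :
    ∀ n : ℕ, 1 ≤ n → (n : ℕ∞) < DeltaKMP A ℓ {v} → i + n ≤ w.length →
      ∀ (t₀ t' : ℝ) (v' : P → ℚ≥0),
        tau w (i + n - 1) ≤ t₀ → t₀ < tau w (i + n) → (t₀, t', v') ∉ matchSet w A := by
  intro n hn1 hnD hin t₀ t' v' ht0l ht0u hmem
  obtain ⟨t, ht0, hti, hw1⟩ := hmatch
  obtain ⟨hpos0, htt', hseg⟩ := hmem
  have hp : w.Pairwise (fun p q => p.2 < q.2) := by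
    haveI : IsTrans (α × ℝ) (fun p q => p.2 < q.2) := ⟨fun a b c h1 h2 => lt_trans h1 h2⟩
    exact List.isChain_iff_pairwise.1 hw.2
  set k := i + n - 1 with hk
  have hik : i ≤ k := by omega
  have hk1 : 1 ≤ k := by omega
  have hkm : k < w.length := by omega
  have hin : i + n = k + 1 := by omega
  rw [hin] at ht0u
  -- basic tau facts
  have hτi := tau_eq w hi (by omega)
  have hτk := tau_eq w hk1 (le_of_lt hkm)
  have hτk1 := tau_eq w (show 1 ≤ k + 1 by omega) hkm
  simp only [Nat.add_sub_cancel] at hτk1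
  rw [hτk] at ht0l
  rw [hτk1] at ht0u
  rw [hτi] at hti
  -- bounds on elements of take k / drop k
  have hbound_take : ∀ p ∈ w.take k, p.2 ≤ t₀ := by
    intro p hp'
    obtain ⟨a, halt, rfl⟩ := List.mem_iff_getElem.1 hp'
    rw [List.getElem_take]
    have ha : a < k := by simp [List.length_take] at halt; omega
    exact le_trans (snd_le_of_pairwise hp (by omega) (by omega)) ht0l
  have hbound_drop : ∀ p ∈ w.drop k, t₀ < p.2 := by
    intro p hp'
    obtain ⟨a, halt, rfl⟩ := List.mem_iff_getElem.1 hp'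
    rw [List.getElem_drop]
    exact lt_of_lt_of_le ht0u (snd_le_of_pairwise hp (by omega)
      (by simp [List.length_drop] at halt; omega))
  -- the three pieces F, G, S
  set F := (w.drop k).takeWhile (fun p => decide (p.2 < t')) with hFdef
  set G := (w.drop k).dropWhile (fun p => decide (p.2 < t')) with hGdef
  have hFG : F ++ G = w.drop k := List.takeWhile_append_dropWhile
  have hfilter : w.filter (fun p => decide (t₀ < p.2 ∧ p.2 < t')) = F := by
    conv_lhs => rw [← List.take_append_drop k w]
    rw [List.filter_append]
    have h1 : (w.take k).filter (fun p => decide (t₀ < p.2 ∧ p.2 < t')) = [] := by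
      rw [List.filter_eq_nil_iff]
      intro p hp'
      simp only [decide_eq_true_eq, not_and]
      intro hcon
      exact absurd hcon (not_lt.2 (hbound_take p hp'))
    have h2 : (w.drop k).filter (fun p => decide (t₀ < p.2 ∧ p.2 < t')) = F := by
      rw [List.filter_congr (q := fun p => decide (p.2 < t'))
        (fun p hp' => by rw [decide_eq_decide]; exact and_iff_right (hbound_drop p hp'))]
      exact filter_eq_takeWhile (hp.sublist (List.drop_sublist k w)) t'
    rw [h1, h2, List.nil_append]
  -- the global witness word
  set u := liftW (shift (w.drop (i-1)) (-t)) with hu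
  -- ===== membership 1 =====
  have hsubne : sub w i j ≠ [] := by
    have : (sub w i j).length = j - (i-1) := by simp [sub]; omega
    intro hcon; rw [hcon] at this; simp at this; omega
  have hτj := tau_eq w (le_trans hi hij) hj
  have hw2TW : shift (w.drop j) (-(tau w j)) ∈ TW α := by
    refine isTW_shift_neg ((hp.sublist (List.drop_sublist j w)).isChain) _ ?_
    intro p hp'
    obtain ⟨a, halt, rfl⟩ := List.mem_iff_getElem.1 hp'
    rw [List.getElem_drop, hτj]
    exact snd_lt_of_pairwise hp (by omega) (by simp [List.length_drop] at halt; omega)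
  have hmem1 : u ∈ ncatS (lang (A.locAcc ℓ) v) (TWl α) := by
    refine ⟨liftW (shift (sub w i j) (-t)), hw1,
      liftW (shift (w.drop j) (-(tau w j))), ⟨_, hw2TW, rfl⟩, ?_⟩
    rw [ncat, lastT_liftW, lastT_shift _ hsubne, lastT_sub w hi hij hj]
    rw [← liftW_shift, shift_shift]
    have e1 : -(tau w j) + ((w[j-1]'(by omega)).2 + -t) = -t := by rw [hτj]; ring
    rw [e1, ← liftW_append, ← shift_append, hu]
    simp only [sub]
    rw [drop_take_drop w (show i - 1 ≤ j by omega) hj]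
  -- ===== membership 2 =====
  have hsubkne : sub w i k ≠ [] := by
    have : (sub w i k).length = k - (i-1) := by simp [sub]; omega
    intro hcon; rw [hcon] at this; simp at this; omega
  have hsubk_sl : (sub w i k).Sublist w :=
    (List.drop_sublist _ _).trans (List.take_sublist _ _)
  have hxTW : shift (sub w i k) (-t) ∈ TWn α n := by
    refine ⟨isTW_shift_neg ((hp.sublist hsubk_sl).isChain) _ ?_, ?_⟩
    · intro p hp'
      obtain ⟨a, halt, rfl⟩ := List.mem_iff_getElem.1 hp'
      simp only [sub] at halt ⊢
      rw [List.getElem_drop, List.getElem_take]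
      refine lt_of_lt_of_le hti (snd_le_of_pairwise hp (by omega) ?_)
      simp [List.length_drop, List.length_take] at halt; omega
    · simp only [shift, List.length_map, sub, List.length_drop, List.length_take]
      omega
  have hyeq : (seg w t₀ t').dropLast = liftW (shift F (-t₀)) := by
    rw [seg, List.dropLast_concat, hfilter, map_some_sub]
  have hymem : liftW (shift F (-t₀)) ∈ minusDollar (lang A v') :=
    ⟨seg w t₀ t', hseg, by simp [seg], hyeq.symm⟩
  have hy'mem : shift (liftW (shift F (-t₀))) (t₀ - tau w k) ∈
      hatS (minusDollar (lang A v')) :=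
    ⟨_, hymem, t₀ - tau w k, by rw [hτk]; linarith, rfl⟩
  set S := sub w i k ++ F with hSdef
  have hSne : S ≠ [] := fun hcon => hsubkne (List.append_eq_nil_iff.1 hcon).1
  have hSG : S ++ G = w.drop (i-1) := by
    rw [hSdef, List.append_assoc, hFG]
    simp only [sub]
    rw [drop_take_drop w (show i - 1 ≤ k by omega) (le_of_lt hkm)]
  set c := lastT S with hc
  have hGp : ∀ p ∈ G, c < p.2 := by
    intro p hp'
    have hpw' : (S ++ G).Pairwise (fun p q => p.2 < q.2) := by
      rw [hSG]; exact hp.sublist (List.drop_sublist _ _)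
    have := (List.pairwise_append.1 hpw').2.2
    rw [hc, lastT_eq_getLast S hSne]
    exact this _ (List.getLast_mem hSne) p hp'
  have hGchain : G.Chain' (fun p q => p.2 < q.2) := by
    refine ((hp.sublist ?_).isChain)
    exact (List.dropWhile_sublist _).trans (List.drop_sublist _ _)
  have hzTW : shift G (-c) ∈ TW α := isTW_shift_neg hGchain _ hGp
  -- xy = liftW (shift S (-t))
  have hxyeq : ncat (liftW (shift (sub w i k) (-t)))
      (shift (liftW (shift F (-t₀))) (t₀ - tau w k)) = liftW (shift S (-t)) := by
    rw [ncat, lastT_liftW, lastT_shift _ hsubkne, lastT_sub w hi hik (le_of_lt hkm)]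
    rw [← liftW_shift, shift_shift, ← liftW_shift, shift_shift]
    have e2 : -t₀ + (t₀ - tau w k) + ((w[k-1]'(by omega)).2 + -t) = -t := by
      rw [hτk]; ring
    rw [e2, ← liftW_append, ← shift_append]
  have hmem2 : u ∈ ncatS (ncatS (TWln α n) (hatS (minusDollar (lang A v')))) (TWl α) := by
    refine ⟨ncat (liftW (shift (sub w i k) (-t)))
        (shift (liftW (shift F (-t₀))) (t₀ - tau w k)),
      ⟨liftW (shift (sub w i k) (-t)), ⟨_, hxTW, rfl⟩, _, hy'mem, rfl⟩,
      liftW (shift G (-c)), ⟨_, hzTW, rfl⟩, ?_⟩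
    rw [hxyeq, ncat, lastT_liftW, lastT_shift _ hSne, ← hc]
    rw [← liftW_shift, shift_shift]
    have e3 : -c + (c + -t) = -t := by ring
    rw [e3, ← liftW_append, ← shift_append, hSG]
  -- conclude
  have hv : v ∈ Vset A ℓ n := ⟨v', u, hmem1, hmem2⟩
  have hle : DeltaKMP A ℓ {v} ≤ (n : ℕ∞) :=
    sInf_le ⟨n, ⟨hn1, Set.singleton_subset_iff.2 hv⟩, rfl⟩
  exact absurd hnD (not_lt.2 hle)

end PTPM
end

section
/- Let A be a parametric timed automaton over the alphabet Σ ⊔ {$} and let w = (ā,τ̄) be a timed word over Σ. Assume ⋃_v L_{−$}(A[v]) ≠ ∅ (union over all parameter valuations v) and let N = min{|u| : u ∈ ⋃_v L_{−$}(A[v])}. Then for every index i ≥ 1 with i + N ≤ |w| and every m ∈ {1,…,N}: if a_{i+N} ≠ a′_{N−m+1} holds for every nonempty timed word (ā′,τ̄′) ∈ ⋃_v L(A[v]), then the match set M(w,A) contains no triple (t₀,t′,v) with τ_{i+m−1} ≤ t₀ < τ_{i+m}. -/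
open scoped Classical NNRat

namespace PTPM

/-! If `τ_{i+m-1} ≤ t₀ < τ_{i+m}`, the segment `w|_(t₀,t')` starts with the letters of `w` from
position `i+m` on (the timestamps of `w` increase). Its `$`-free part lies in some `L_{-$}(A[v])`,
so it has at least `N` letters, and its `(N-m+1)`-st letter is `a_{i+N} = a`, which the hypothesis
on the words of `L(A[v])` forbids. -/

theorem _root_.List.Pairwise.filter_eq_takeWhile {β : Type*} {R : β → β → Prop}
    {p : β → Bool} {l : List β} (hl : l.Pairwise R)
    (hp : ∀ a b, R a b → p b = true → p a = true) :
    l.filter p = l.takeWhile p := by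
  induction l with
  | nil => rfl
  | cons a l ih =>
    rw [List.pairwise_cons] at hl
    cases ha : p a with
    | true => simp [ha, ih hl.2]
    | false =>
      simp only [List.filter_cons, List.takeWhile_cons, ha, Bool.false_eq_true, ite_false]
      exact List.filter_eq_nil_iff.mpr fun b hb hpb => by simpa [ha] using hp a b (hl.1 b hb) hpb

theorem IsTW.pairwise {α : Type*} {w : TWord α} (hw : IsTW w) :
    w.Pairwise (fun p q => p.2 < q.2) :=
  haveI : IsTrans (α × ℝ) (fun p q => p.2 < q.2) := ⟨fun _ _ _ => lt_trans⟩
  List.isChain_iff_pairwise.mp hw.2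

theorem le_lastT_of_mem {α : Type*} {l : TWord α} (hl : l.Pairwise (fun p q => p.2 < q.2))
    {p : α × ℝ} (hp : p ∈ l) : p.2 ≤ lastT l := by
  have hne : l ≠ [] := List.ne_nil_of_mem hp
  have hlast : lastT l = (l.getLast hne).2 := by simp [lastT, List.getLast?_eq_some_getLast hne]
  rw [← List.dropLast_append_getLast hne] at hl hp
  rw [hlast]
  rcases List.mem_append.mp hp with hp | hp
  · exact (List.pairwise_append.mp hl).2.2 p hp _ (List.mem_singleton_self _) |>.le
  · rw [List.mem_singleton.mp hp]

theorem tau_succ {α : Type*} (w : TWord α) {k : ℕ} (hk : k < w.length) :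
    tau w (k + 1) = w[k].2 := by
  simp [tau, lastT, List.getLast?_take, List.getElem?_eq_getElem hk]

theorem le_tau_of_mem_take {α : Type*} {w : TWord α} (hw : IsTW w) {k : ℕ} {p : α × ℝ}
    (hp : p ∈ w.take k) : p.2 ≤ tau w k :=
  le_lastT_of_mem (hw.pairwise.sublist (List.take_sublist k w)) hp

theorem tau_succ_le_of_mem_drop {α : Type*} {w : TWord α} (hw : IsTW w) {k : ℕ} {p : α × ℝ}
    (hp : p ∈ w.drop k) : tau w (k + 1) ≤ p.2 := by
  have hk : k < w.length := by
    by_contra! hk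
    simp [List.drop_of_length_le hk] at hp
  have hsorted := hw.pairwise.sublist (List.drop_sublist k w)
  rw [List.drop_eq_getElem_cons hk] at hp hsorted
  rw [tau_succ w hk]
  rcases List.mem_cons.mp hp with rfl | hp
  · rfl
  · exact (List.pairwise_cons.mp hsorted).1 p hp |>.le

theorem filter_window_eq_takeWhile_drop {α : Type*} {w : TWord α} (hw : IsTW w) {k : ℕ}
    {t t' : ℝ} (ht₀ : tau w k ≤ t) (ht : t < tau w (k + 1)) :
    w.filter (fun p => decide (t < p.2 ∧ p.2 < t')) =
      (w.drop k).takeWhile (fun p => decide (p.2 < t')) := by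
  calc w.filter (fun p => decide (t < p.2 ∧ p.2 < t'))
      = (w.take k).filter (fun p => decide (t < p.2 ∧ p.2 < t')) ++
          (w.drop k).filter (fun p => decide (t < p.2 ∧ p.2 < t')) := by
        rw [← List.filter_append, List.take_append_drop]
    _ = (w.drop k).filter (fun p => decide (p.2 < t')) := by
        rw [List.filter_eq_nil_iff.mpr, List.nil_append]
        · refine List.filter_congr fun p hp => ?_
          have := ht.trans_le (tau_succ_le_of_mem_drop hw hp)
          simp [this]
        · intro p hp
          have := (le_tau_of_mem_take hw hp).trans ht₀
          simp [this.not_gt]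
    _ = (w.drop k).takeWhile (fun p => decide (p.2 < t')) :=
        (hw.pairwise.sublist (List.drop_sublist k w)).filter_eq_takeWhile
          fun p q hpq hq => by simpa using hpq.trans (by simpa using hq)

theorem seg_ne_nil {α : Type*} (w : TWord α) (t t' : ℝ) : seg w t t' ≠ [] := by
  simp [seg]

theorem letterAt_seg {α : Type*} {w : TWord α} (hw : IsTW w) {k j : ℕ} {t t' : ℝ}
    (ht₀ : tau w k ≤ t) (ht : t < tau w (k + 1)) (hj : 1 ≤ j)
    (hjs : j < (seg w t t').length) :
    letterAt (seg w t t') j = (letterAt w (k + j)).map some := by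
  have hseg : seg w t t' = ((w.drop k).takeWhile (fun p => decide (p.2 < t'))).map
      (fun p => ((some p.1 : Option α), p.2 - t)) ++ [(none, t' - t)] := by
    rw [seg, filter_window_eq_takeWhile_drop hw ht₀ ht]
  have hjF : j - 1 < ((w.drop k).takeWhile (fun p => decide (p.2 < t'))).length := by
    simp only [hseg, List.length_append, List.length_map, List.length_singleton] at hjs
    omega
  have hjw : k + (j - 1) < w.length := by
    have := hjF.trans_le (List.takeWhile_prefix _).length_le
    rw [List.length_drop] at this
    omega
  rw [letterAt, letterAt, hseg, List.getElem?_append_left (by simpa using hjF),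
    List.getElem?_map, List.getElem?_eq_getElem hjF, (List.takeWhile_prefix _).getElem hjF,
    List.getElem_drop, show k + j - 1 = k + (j - 1) by omega, List.getElem?_eq_getElem hjw]
  rfl

theorem statement3_general {α L C P : Type*}
    (A : PTA (Option α) L C P) (w : TWord α) (hw : IsTW w)
    (N : ℕ)
    (hNmin : ∀ v : P → ℚ≥0, ∀ u ∈ minusDollar (lang A v), N ≤ u.length)
    (i : ℕ)
    (a : α) (ha : letterAt w (i + N) = some a)
    (m : ℕ) (hm : 1 ≤ m) (hmN : m ≤ N)
    (hdiff : ∀ v : P → ℚ≥0, ∀ u ∈ lang A v, u ≠ [] →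
      letterAt u (N - m + 1) ≠ some (some a)) :
    ∀ (t₀ t' : ℝ) (v : P → ℚ≥0),
      tau w (i + m - 1) ≤ t₀ → t₀ < tau w (i + m) → (t₀, t', v) ∉ matchSet w A := by
  rintro t₀ t' v ht₀ ht ⟨-, -, hlang : seg w t₀ t' ∈ lang A v⟩
  have hne := seg_ne_nil w t₀ t'
  have hN : N ≤ (seg w t₀ t').length - 1 := by
    simpa using hNmin v _ ⟨_, hlang, hne, rfl⟩
  rw [show i + m = i + m - 1 + 1 by omega] at ht
  refine hdiff v _ hlang hne ?_
  rw [letterAt_seg hw ht₀ ht (by omega) (by omega), show i + m - 1 + (N - m + 1) = i + N by omega,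
    ha, Option.map_some]

/-- Lemma `QS`. -/
theorem statement3 {α L C P : Type*} [Finite α] [Finite L] [Finite C] [Finite P]
    (A : PTA (Option α) L C P) (w : TWord α) (hw : IsTW w)
    (N : ℕ)
    (hNmem : ∃ (v : P → ℚ≥0) (u : TWord (Option α)),
      u ∈ minusDollar (lang A v) ∧ u.length = N)
    (hNmin : ∀ v : P → ℚ≥0, ∀ u ∈ minusDollar (lang A v), N ≤ u.length)
    (i : ℕ) (hi : 1 ≤ i) (hiN : i + N ≤ w.length)
    (a : α) (ha : letterAt w (i + N) = some a)
    (m : ℕ) (hm : 1 ≤ m) (hmN : m ≤ N)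
    (hdiff : ∀ v : P → ℚ≥0, ∀ u ∈ lang A v, u ≠ [] →
      letterAt u (N - m + 1) ≠ some (some a)) :
    ∀ (t₀ t' : ℝ) (v : P → ℚ≥0),
      tau w (i + m - 1) ≤ t₀ → t₀ < tau w (i + m) → (t₀, t', v) ∉ matchSet w A :=
  statement3_general A w hw N hNmin i a ha m hm hmN hdiff

end PTPM
end
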